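/- Let R be a finite proper nearfield with |R| = q and k ≥ 1. Set n = (q^k − 1)/(q − 1). Then there exist vectors v_1,…,v_k ∈ R^n with gen(v_1,…,v_k) = R^n. Consequently mdim(k,R), the maximum dimension of a near-vector space R^m generable by k vectors, equals (q^k − 1)/(q − 1). -/

import Mathlib

open scoped BigOperators

/-- A (left) nearfield: a zero-symmetric (left) nearring whose nonzero
elements form a multiplicative group. The additive group is abelian. -/
class Nearfield (R : Type*) extends AddCommGroup R, One R, Mul R, Inv R where
  protected mul_assoc : ∀ a b c : R, a * b * c = a * (b * c)
  protected left_distrib : ∀ a b c : R, a * (b + c) = a * b + a * c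
  protected zero_mul : ∀ a : R, (0 : R) * a = 0
  protected mul_zero : ∀ a : R, a * (0 : R) = 0
  protected one_mul : ∀ a : R, (1 : R) * a = a
  protected mul_one : ∀ a : R, a * (1 : R) = a
  protected one_ne_zero : (1 : R) ≠ 0
  protected mul_inv_cancel : ∀ a : R, a ≠ 0 → a * a⁻¹ = 1
  protected inv_mul_cancel : ∀ a : R, a ≠ 0 → a⁻¹ * a = 1

namespace Nearfield

/-- A nearfield is proper if it is not a skewfield (right distributivity fails). -/
def IsProper (R : Type*) [Nearfield R] : Prop :=
  ∃ a b c : R, (a + b) * c ≠ a * c + b * c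

variable {R : Type*} [Nearfield R]

/-- Right scalar multiplication on `R^n`, applied coordinatewise. -/
def vsmul {n : ℕ} (v : Fin n → R) (r : R) : Fin n → R := fun i => v i * r

/-- An `R`-subgroup of `R^n`: an additive subgroup closed under right scalar
multiplication. -/
def IsRSubgroup {n : ℕ} (H : Set (Fin n → R)) : Prop :=
  (0 : Fin n → R) ∈ H ∧ (∀ x ∈ H, ∀ y ∈ H, x + y ∈ H) ∧
    (∀ x ∈ H, -x ∈ H) ∧ (∀ x ∈ H, ∀ r : R, vsmul x r ∈ H)

/-- `gen S` is the smallest `R`-subgroup containing `S`. -/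
def gen {n : ℕ} (S : Set (Fin n → R)) : Set (Fin n → R) :=
  ⋂₀ {H : Set (Fin n → R) | IsRSubgroup H ∧ S ⊆ H}

/-- The support of a vector. -/
def supp {n : ℕ} (u : Fin n → R) : Set (Fin n) := {i | u i ≠ 0}

/-- `dirSum u = { Σ_i u_i r_i : r_i ∈ R }`. -/
def dirSum {n ℓ : ℕ} (u : Fin ℓ → Fin n → R) : Set (Fin n → R) :=
  {v | ∃ r : Fin ℓ → R, v = ∑ i, vsmul (u i) (r i)}

/-- The "scalar product" `⟨x,y⟩ = Σ_i x_i·y_i`. -/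
def dot {n : ℕ} (x y : Fin n → R) : R := ∑ i, x i * y i

/-- The weight of a vector: the number of its nonzero coordinates. -/
noncomputable def weight {n : ℕ} (u : Fin n → R) : ℕ := (supp u).ncard

/-- A vector is simple if it has weight one or two. -/
def IsSimple {n : ℕ} (u : Fin n → R) : Prop := weight u = 1 ∨ weight u = 2

/-- The orthogonal set `D^⊥`. -/
def perp {n : ℕ} (D : Set (Fin n → R)) : Set (Fin n → R) :=
  {x | ∀ e ∈ D, dot e x = 0}

/-- `c(k,R)`: nonzero vectors of `R^k` whose first nonzero coordinate is `1`. -/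
def cSet (R : Type*) [Nearfield R] (k : ℕ) : Set (Fin k → R) :=
  {u | ∃ i : Fin k, u i = 1 ∧ ∀ j : Fin k, j < i → u j = 0}

/-- The seed number of `T`: the least size of a set generating `T`. -/
noncomputable def seed {n : ℕ} (T : Set (Fin n → R)) : ℕ :=
  sInf {k | ∃ S : Finset (Fin n → R), S.card = k ∧ gen (↑S : Set (Fin n → R)) = T}

/-- Iterated linear-combination closures. -/
def LC {n : ℕ} (S : Set (Fin n → R)) : ℕ → Set (Fin n → R)
  | 0 => S
  | m + 1 => {v | ∃ (ℓ : ℕ) (w : Fin ℓ → Fin n → R) (lam : Fin ℓ → R),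
      (∀ i, w i ∈ LC S m) ∧ v = ∑ i, vsmul (w i) (lam i)}

end Nearfield

/-- Stirling numbers of the second kind. -/
def stirling2 : ℕ → ℕ → ℕ
  | 0, 0 => 1
  | 0, _ + 1 => 0
  | _ + 1, 0 => 0
  | n + 1, k + 1 => (k + 1) * stirling2 n (k + 1) + stirling2 n k

open Nearfield

/-
The rows of a `k × n` matrix over a proper nearfield `R` generate `R^n` as soon as no column
vanishes and no column is a left multiple of another. Then the projection of the generated
`R`-subgroup to any two coordinates is an `R`-subgroup of `R²` lying neither in an axis nor in a
graph `y ↦ a * y`, hence all of `R²`. An `R`-subgroup projecting onto every coordinate pair is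
everything, by induction on `n`: the vectors with last coordinate `0` form such a subgroup one
dimension down, since the case `n = 3` applies to the coordinates `i, j, last`. For `n = 3` the
only alternative is a graph `x 1 = a * x 0 + b * x 2` with `a, b ≠ 0`, and closure under right
multiplication then forces `(p + q) * r = p * r + q * r`, contradicting properness.
Both conditions are also necessary, so normalising the columns (first nonzero entry `1`) embeds
them into `c(k,R)`, whose elements as columns do generate; and `|c(k,R)| * (q - 1) = q^k - 1`.
-/

theorem Nat.card_subtype_ne {α : Type*} [Finite α] (a : α) :
    Nat.card {x // x ≠ a} = Nat.card α - 1 := by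
  have := Fintype.ofFinite α
  classical
  rw [Nat.card_eq_fintype_card, Nat.card_eq_fintype_card, Fintype.card_subtype_compl,
    Fintype.card_subtype_eq]

namespace Nearfield

open Set

section Pairs

variable {R : Type*} {m n : ℕ}

def ProjectsOntoPairs (H : Set (Fin n → R)) : Prop :=
  ∀ i j : Fin n, i ≠ j → ∀ a b : R, ∃ x ∈ H, x i = a ∧ x j = b

theorem ProjectsOntoPairs.image_comp {H : Set (Fin n → R)} (hp : ProjectsOntoPairs H)
    {σ : Fin m → Fin n} (hσ : Function.Injective σ) : ProjectsOntoPairs ((· ∘ σ) '' H) := by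
  intro i j hij a b
  obtain ⟨x, hx, hxi, hxj⟩ := hp (σ i) (σ j) (hσ.ne hij) a b
  exact ⟨x ∘ σ, mem_image_of_mem _ hx, hxi, hxj⟩

theorem ProjectsOntoPairs.eq_univ_of_fin_two {H : Set (Fin 2 → R)} (hp : ProjectsOntoPairs H) :
    H = univ := by
  refine eq_univ_of_forall fun w => ?_
  obtain ⟨x, hx, hx0, hx1⟩ := hp 0 1 (by decide) (w 0) (w 1)
  convert hx
  funext i
  fin_cases i <;> simp [hx0, hx1]

end Pairs

variable {R : Type*} [Nearfield R]

protected theorem mul_neg (a b : R) : a * -b = -(a * b) :=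
  eq_neg_of_add_eq_zero_right <| by
    rw [← Nearfield.left_distrib, add_neg_cancel, Nearfield.mul_zero]

protected theorem inv_mul_cancel_left {a : R} (ha : a ≠ 0) (b : R) : a⁻¹ * (a * b) = b := by
  rw [← Nearfield.mul_assoc, Nearfield.inv_mul_cancel a ha, Nearfield.one_mul]

protected theorem mul_inv_cancel_left {a : R} (ha : a ≠ 0) (b : R) : a * (a⁻¹ * b) = b := by
  rw [← Nearfield.mul_assoc, Nearfield.mul_inv_cancel a ha, Nearfield.one_mul]

protected theorem mul_left_cancel {a b c : R} (ha : a ≠ 0) (h : a * b = a * c) : b = c := by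
  rw [← Nearfield.inv_mul_cancel_left ha b, h, Nearfield.inv_mul_cancel_left ha]

@[simp] theorem vsmul_apply {n : ℕ} (x : Fin n → R) (r : R) (i : Fin n) :
    vsmul x r i = x i * r := rfl

section RSubgroup

variable {m n : ℕ} {H K : Set (Fin n → R)}

theorem IsRSubgroup.zero_mem (hH : IsRSubgroup H) : (0 : Fin n → R) ∈ H := hH.1

theorem IsRSubgroup.add_mem (hH : IsRSubgroup H) {x y : Fin n → R} (hx : x ∈ H) (hy : y ∈ H) :
    x + y ∈ H := hH.2.1 x hx y hy

theorem IsRSubgroup.neg_mem (hH : IsRSubgroup H) {x : Fin n → R} (hx : x ∈ H) : -x ∈ H :=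
  hH.2.2.1 x hx

theorem IsRSubgroup.vsmul_mem (hH : IsRSubgroup H) {x : Fin n → R} (hx : x ∈ H) (r : R) :
    vsmul x r ∈ H := hH.2.2.2 x hx r

theorem IsRSubgroup.sub_mem (hH : IsRSubgroup H) {x y : Fin n → R} (hx : x ∈ H) (hy : y ∈ H) :
    x - y ∈ H := sub_eq_add_neg x y ▸ hH.add_mem hx (hH.neg_mem hy)

theorem IsRSubgroup.inter (hH : IsRSubgroup H) (hK : IsRSubgroup K) : IsRSubgroup (H ∩ K) :=
  ⟨⟨hH.zero_mem, hK.zero_mem⟩, fun _ hx _ hy => ⟨hH.add_mem hx.1 hy.1, hK.add_mem hx.2 hy.2⟩,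
    fun _ hx => ⟨hH.neg_mem hx.1, hK.neg_mem hx.2⟩,
    fun _ hx r => ⟨hH.vsmul_mem hx.1 r, hK.vsmul_mem hx.2 r⟩⟩

theorem IsRSubgroup.image_comp (hH : IsRSubgroup H) (σ : Fin m → Fin n) :
    IsRSubgroup ((· ∘ σ) '' H) := by
  refine ⟨⟨0, hH.zero_mem, rfl⟩, ?_, ?_, ?_⟩
  · rintro _ ⟨x, hx, rfl⟩ _ ⟨y, hy, rfl⟩
    exact ⟨x + y, hH.add_mem hx hy, rfl⟩
  · rintro _ ⟨x, hx, rfl⟩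
    exact ⟨-x, hH.neg_mem hx, rfl⟩
  · rintro _ ⟨x, hx, rfl⟩ r
    exact ⟨vsmul x r, hH.vsmul_mem hx r, rfl⟩

theorem isRSubgroup_setOf_eq_zero (j : Fin n) : IsRSubgroup {x : Fin n → R | x j = 0} :=
  ⟨rfl, fun x (hx : x j = 0) y (hy : y j = 0) => show x j + y j = 0 by rw [hx, hy, add_zero],
    fun x (hx : x j = 0) => show -x j = 0 by rw [hx, neg_zero],
    fun x (hx : x j = 0) r => show x j * r = 0 by rw [hx, Nearfield.zero_mul]⟩

theorem isRSubgroup_setOf_eq_mul (i j : Fin n) (a : R) :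
    IsRSubgroup {x : Fin n → R | x j = a * x i} :=
  ⟨(Nearfield.mul_zero a).symm,
    fun x (hx : x j = a * x i) y (hy : y j = a * y i) =>
      show x j + y j = a * (x i + y i) by rw [hx, hy, Nearfield.left_distrib],
    fun x (hx : x j = a * x i) => show -x j = a * -x i by rw [hx, Nearfield.mul_neg],
    fun x (hx : x j = a * x i) r =>
      show x j * r = a * (x i * r) by rw [hx, Nearfield.mul_assoc]⟩

theorem IsRSubgroup.eq_univ_of_coord (hH : IsRSubgroup H) (j : Fin n)
    (h0 : ∀ w : Fin n → R, w j = 0 → w ∈ H) (h1 : ∃ x ∈ H, x j ≠ 0) : H = univ := by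
  obtain ⟨x, hx, hxj⟩ := h1
  refine eq_univ_of_forall fun w => ?_
  have hmul : vsmul x ((x j)⁻¹ * w j) ∈ H := hH.vsmul_mem hx _
  have hrest : w - vsmul x ((x j)⁻¹ * w j) ∈ H :=
    h0 _ (by simp [Nearfield.mul_inv_cancel_left hxj])
  simpa using hH.add_mem hrest hmul

theorem subset_gen (S : Set (Fin n → R)) : S ⊆ gen S :=
  fun _ hx => mem_sInter.2 fun _ hH => hH.2 hx

theorem gen_subset {S : Set (Fin n → R)} (hH : IsRSubgroup H) (hS : S ⊆ H) : gen S ⊆ H :=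
  fun _ hx => mem_sInter.1 hx H ⟨hH, hS⟩

theorem isRSubgroup_gen (S : Set (Fin n → R)) : IsRSubgroup (gen S) := by
  refine ⟨mem_sInter.2 fun H hH => hH.1.zero_mem, fun x hx y hy => ?_, fun x hx => ?_,
    fun x hx r => ?_⟩ <;> refine mem_sInter.2 fun H hH => ?_
  · exact hH.1.add_mem (mem_sInter.1 hx H hH) (mem_sInter.1 hy H hH)
  · exact hH.1.neg_mem (mem_sInter.1 hx H hH)
  · exact hH.1.vsmul_mem (mem_sInter.1 hx H hH) r

theorem IsRSubgroup.eq_univ_of_gen_eq_univ {S : Set (Fin n → R)} (hH : IsRSubgroup H)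
    (hS : S ⊆ H) (hgen : gen S = univ) : H = univ :=
  eq_univ_of_univ_subset (hgen ▸ gen_subset hH hS)

theorem IsRSubgroup.eq_univ_of_fin_two {K : Set (Fin 2 → R)} (hK : IsRSubgroup K)
    (h0 : ∃ y ∈ K, y 0 ≠ 0) (h1 : ∀ a : R, ∃ y ∈ K, y 1 ≠ a * y 0) : K = univ := by
  by_cases hker : ∃ z ∈ K, z 0 = 0 ∧ z 1 ≠ 0
  · obtain ⟨z, hz, hz0, hz1⟩ := hker
    refine hK.eq_univ_of_coord 0 (fun w hw0 => ?_) h0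
    convert hK.vsmul_mem hz ((z 1)⁻¹ * w 1)
    funext i
    fin_cases i <;> simp [hw0, hz0, Nearfield.zero_mul, Nearfield.mul_inv_cancel_left hz1]
  · push Not at hker
    obtain ⟨v, hv, hv0⟩ := h0
    obtain ⟨y, hy, hy1⟩ := h1 (v 1 * (v 0)⁻¹)
    have hd := hker _ (hK.sub_mem hy (hK.vsmul_mem hv ((v 0)⁻¹ * y 0)))
      (by simp [Nearfield.mul_inv_cancel_left hv0])
    rw [Pi.sub_apply, vsmul_apply, sub_eq_zero, ← Nearfield.mul_assoc] at hd
    exact (hy1 hd).elim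

section Three

variable {H : Set (Fin 3 → R)}

theorem IsRSubgroup.exists_coord_one_eq_mul_add_mul (hH : IsRSubgroup H) (hp : ProjectsOntoPairs H)
    (hker : ∀ z ∈ H, z 0 = 0 → z 2 = 0 → z 1 = 0) :
    ∃ a b : R, a ≠ 0 ∧ b ≠ 0 ∧ ∀ x ∈ H, x 1 = a * x 0 + b * x 2 := by
  obtain ⟨v, hv, hv0, hv2⟩ := hp 0 2 (by decide) 1 0
  obtain ⟨u, hu, hu0, hu2⟩ := hp 0 2 (by decide) 0 1
  have hform : ∀ x ∈ H, x 1 = v 1 * x 0 + u 1 * x 2 := by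
    intro x hx
    have hd := hker _ (hH.sub_mem (hH.sub_mem hx (hH.vsmul_mem hv (x 0))) (hH.vsmul_mem hu (x 2)))
      (by simp [hv0, hu0, Nearfield.one_mul, Nearfield.zero_mul])
      (by simp [hv2, hu2, Nearfield.one_mul, Nearfield.zero_mul])
    simpa [sub_sub, sub_eq_zero] using hd
  refine ⟨v 1, u 1, fun ha => ?_, fun hb => ?_, hform⟩
  · obtain ⟨y, hy, hy1, hy2⟩ := hp 1 2 (by decide) 1 0
    have := hform y hy
    rw [hy1, hy2, ha, Nearfield.zero_mul, Nearfield.mul_zero, add_zero] at this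
    exact Nearfield.one_ne_zero this
  · obtain ⟨y, hy, hy0, hy1⟩ := hp 0 1 (by decide) 0 1
    have := hform y hy
    rw [hy0, hy1, hb, Nearfield.zero_mul, Nearfield.mul_zero, add_zero] at this
    exact Nearfield.one_ne_zero this

theorem right_distrib_of_coord_one_eq (hH : IsRSubgroup H) (hp : ProjectsOntoPairs H) {a b : R}
    (ha : a ≠ 0) (hb : b ≠ 0) (hform : ∀ x ∈ H, x 1 = a * x 0 + b * x 2) (p q r : R) :
    (p + q) * r = p * r + q * r := by
  obtain ⟨x, hx, hx0, hx2⟩ := hp 0 2 (by decide) (a⁻¹ * p) (b⁻¹ * q)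
  have hx1 : x 1 = p + q := by
    rw [hform x hx, hx0, hx2, Nearfield.mul_inv_cancel_left ha, Nearfield.mul_inv_cancel_left hb]
  have hxr := hform _ (hH.vsmul_mem hx r)
  simp only [vsmul_apply, hx0, hx1, hx2] at hxr
  rwa [← Nearfield.mul_assoc a, ← Nearfield.mul_assoc b, Nearfield.mul_inv_cancel_left ha,
    Nearfield.mul_inv_cancel_left hb] at hxr

theorem IsRSubgroup.eq_univ_of_fin_three (hR : IsProper R) (hH : IsRSubgroup H)
    (hp : ProjectsOntoPairs H) : H = univ := by
  by_cases hker : ∃ z ∈ H, z 0 = 0 ∧ z 2 = 0 ∧ z 1 ≠ 0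
  · obtain ⟨z, hz, hz0, hz2, hz1⟩ := hker
    obtain ⟨x, hx, hx2, -⟩ := hp 2 0 (by decide) 1 0
    refine hH.eq_univ_of_coord 2 (fun w hw2 => ?_) ⟨x, hx, hx2 ▸ Nearfield.one_ne_zero⟩
    obtain ⟨y, hy, hy0, hy2⟩ := hp 0 2 (by decide) (w 0) 0
    convert hH.add_mem hy (hH.vsmul_mem hz ((z 1)⁻¹ * (w 1 - y 1)))
    funext i
    fin_cases i <;>
      simp [hy0, hy2, hz0, hz2, hw2, Nearfield.zero_mul, Nearfield.mul_inv_cancel_left hz1]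
  · push Not at hker
    obtain ⟨a, b, ha, hb, hform⟩ := hH.exists_coord_one_eq_mul_add_mul hp hker
    obtain ⟨p, q, r, hpqr⟩ := hR
    exact (hpqr (right_distrib_of_coord_one_eq hH hp ha hb hform p q r)).elim

end Three

theorem IsRSubgroup.eq_univ_of_projectsOntoPairs (hR : IsProper R) (hn : 2 ≤ n)
    (hH : IsRSubgroup H) (hp : ProjectsOntoPairs H) : H = univ := by
  induction n, hn using Nat.le_induction with
  | base => exact hp.eq_univ_of_fin_two
  | succ n hn ih =>
    set K := (· ∘ Fin.castSucc) '' (H ∩ {x | x (Fin.last n) = 0})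
    have hK : IsRSubgroup K := (hH.inter (isRSubgroup_setOf_eq_zero _)).image_comp _
    have hKp : ProjectsOntoPairs K := by
      intro i j hij a b
      have hσ : Function.Injective ![i.castSucc, j.castSucc, Fin.last n] := by
        intro s t hst
        fin_cases s <;> fin_cases t <;>
          simp_all [Fin.castSucc_ne_last, (Fin.castSucc_ne_last _).symm]
      have hT := (hH.image_comp _).eq_univ_of_fin_three hR (hp.image_comp hσ)
      obtain ⟨x, hx, hxσ⟩ : ![a, b, 0] ∈ (· ∘ ![i.castSucc, j.castSucc, Fin.last n]) '' H :=
        hT ▸ mem_univ _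
      exact ⟨x ∘ Fin.castSucc, ⟨x, ⟨hx, congrFun hxσ 2⟩, rfl⟩, congrFun hxσ 0, congrFun hxσ 1⟩
    have hKu := ih hK hKp
    obtain ⟨x, hx, hxl, -⟩ := hp (Fin.last n) 0 (by simp [Fin.ext_iff]; omega) 1 0
    refine hH.eq_univ_of_coord (Fin.last n) (fun w hw => ?_) ⟨x, hx, hxl ▸ Nearfield.one_ne_zero⟩
    obtain ⟨y, ⟨hy, hyl⟩, hyw⟩ : w ∘ Fin.castSucc ∈ K := hKu ▸ mem_univ _
    convert hy
    funext t
    induction t using Fin.lastCases with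
    | last => rw [hw, hyl]
    | cast t => exact (congrFun hyw t).symm

theorem IsRSubgroup.eq_univ_of_coord_ne (hR : IsProper R)
    (hH : IsRSubgroup H) (h1 : ∀ i, ∃ x ∈ H, x i ≠ 0)
    (h2 : ∀ i j, i ≠ j → ∀ a : R, ∃ x ∈ H, x j ≠ a * x i) : H = univ := by
  obtain _ | _ | n := n
  · exact eq_univ_of_forall fun w => Subsingleton.elim 0 w ▸ hH.zero_mem
  · refine hH.eq_univ_of_coord 0 (fun w hw => ?_) (h1 0)
    convert hH.zero_mem
    funext i
    rwa [Fin.fin_one_eq_zero i]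
  · refine hH.eq_univ_of_projectsOntoPairs hR (by omega) fun i j hij a b => ?_
    have hK : (· ∘ ![i, j]) '' H = univ := by
      refine (hH.image_comp _).eq_univ_of_fin_two ?_ fun c => ?_
      · obtain ⟨x, hx, hxi⟩ := h1 i
        exact ⟨_, mem_image_of_mem _ hx, hxi⟩
      · obtain ⟨x, hx, hxj⟩ := h2 i j hij c
        exact ⟨_, mem_image_of_mem _ hx, hxj⟩
    obtain ⟨x, hx, hxij⟩ : ![a, b] ∈ (· ∘ ![i, j]) '' H := hK ▸ mem_univ _
    exact ⟨x, hx, congrFun hxij 0, congrFun hxij 1⟩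

theorem exists_coord_ne_zero_of_gen_eq_univ {S : Set (Fin n → R)}
    (hS : gen S = univ) (i : Fin n) : ∃ x ∈ S, x i ≠ 0 := by
  by_contra! h
  have := (isRSubgroup_setOf_eq_zero i).eq_univ_of_gen_eq_univ h hS ▸ mem_univ fun _ => (1 : R)
  exact Nearfield.one_ne_zero this

theorem exists_coord_ne_mul_of_gen_eq_univ {S : Set (Fin n → R)}
    (hS : gen S = univ) {i j : Fin n} (hij : i ≠ j) (a : R) : ∃ x ∈ S, x j ≠ a * x i := by
  by_contra! h
  have := (isRSubgroup_setOf_eq_mul i j a).eq_univ_of_gen_eq_univ h hS ▸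
    mem_univ (Pi.single j (1 : R))
  simp [Pi.single_eq_of_ne hij, Nearfield.mul_zero, Nearfield.one_ne_zero] at this

end RSubgroup

section CSet

variable {k : ℕ}

theorem exists_mul_mem_cSet {w : Fin k → R} (hw : w ≠ 0) :
    ∃ c ≠ (0 : R), ∃ u ∈ cSet R k, ∀ t, w t = c * u t := by
  have hne : {i | w i ≠ 0}.Nonempty := Function.ne_iff.1 hw
  set i := wellFounded_lt.min _ hne
  have hi : w i ≠ 0 := WellFounded.min_mem _ _ hne
  have hlt : ∀ j < i, w j = 0 := fun j hj =>
    by_contra fun h => wellFounded_lt.not_lt_min {i | w i ≠ 0} h hj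
  refine ⟨w i, hi, fun t => (w i)⁻¹ * w t, ⟨i, Nearfield.inv_mul_cancel _ hi, fun j hj => ?_⟩,
    fun t => (Nearfield.mul_inv_cancel_left hi _).symm⟩
  show (w i)⁻¹ * w j = 0
  rw [hlt j hj, Nearfield.mul_zero]

theorem eq_of_mul_eq_mul_of_mem_cSet {u u' : Fin k → R} (hu : u ∈ cSet R k)
    (hu' : u' ∈ cSet R k) {c c' : R} (hc : c ≠ 0) (h : ∀ t, c * u t = c' * u' t) :
    c = c' ∧ u = u' := by
  obtain ⟨i, hui, hu0⟩ := hu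
  obtain ⟨i', hui', hu0'⟩ := hu'
  have hii : i = i' := by
    refine le_antisymm (not_lt.1 fun hlt => hc ?_) (not_lt.1 fun hlt => hc ?_)
    · have hc' : c' = 0 := by
        simpa [hu0 i' hlt, hui', Nearfield.mul_zero, Nearfield.mul_one] using (h i').symm
      simpa [hui, hc', Nearfield.mul_one, Nearfield.zero_mul] using h i
    · simpa [hui, hu0' i hlt, Nearfield.mul_one, Nearfield.mul_zero] using h i
  subst hii
  have hcc : c = c' := by simpa [hui, hui', Nearfield.mul_one] using h i
  subst hcc
  exact ⟨rfl, funext fun t => Nearfield.mul_left_cancel hc (h t)⟩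

theorem card_cSet_mul [Finite R] (k : ℕ) :
    Nat.card (cSet R k) * (Nat.card R - 1) = Nat.card R ^ k - 1 := by
  let f : cSet R k × {c : R // c ≠ 0} → {w : Fin k → R // w ≠ 0} := fun p =>
    ⟨fun t => p.2.1 * p.1.1 t, fun h => by
      obtain ⟨i, hi, -⟩ := p.1.2
      exact p.2.2 (by simpa [hi, Nearfield.mul_one] using congrFun h i)⟩
  have hf : Function.Bijective f := by
    refine ⟨fun ⟨⟨u, hu⟩, ⟨c, hc⟩⟩ ⟨⟨u', hu'⟩, ⟨c', hc'⟩⟩ h => ?_, fun ⟨w, hw⟩ => ?_⟩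
    · obtain ⟨rfl, rfl⟩ :=
        eq_of_mul_eq_mul_of_mem_cSet hu hu' hc (congrFun (congrArg Subtype.val h))
      rfl
    · obtain ⟨c, hc, u, hu, hwu⟩ := exists_mul_mem_cSet hw
      exact ⟨⟨⟨u, hu⟩, ⟨c, hc⟩⟩, Subtype.ext (funext fun t => (hwu t).symm)⟩
  rw [← Nat.card_subtype_ne, ← Nat.card_prod, Nat.card_congr (Equiv.ofBijective f hf),
    Nat.card_subtype_ne, Nat.card_fun, Nat.card_fin]

theorem card_cSet [Finite R] (k : ℕ) :
    Nat.card (cSet R k) = (Nat.card R ^ k - 1) / (Nat.card R - 1) := by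
  have : Nontrivial R := ⟨⟨1, 0, Nearfield.one_ne_zero⟩⟩
  refine (Nat.div_eq_of_eq_mul_left ?_ (card_cSet_mul k).symm).symm
  have := Finite.one_lt_card (α := R)
  omega

theorem gen_range_eq_univ_of_mem_cSet (hR : IsProper R) {n : ℕ} {c : Fin n → Fin k → R}
    (hc : ∀ j, c j ∈ cSet R k) (hinj : Function.Injective c) :
    gen (range fun t j => c j t) = univ := by
  refine (isRSubgroup_gen _).eq_univ_of_coord_ne hR (fun j => ?_) fun i j hij a => ?_
  · obtain ⟨t, ht, -⟩ := hc j
    exact ⟨_, subset_gen _ ⟨t, rfl⟩, fun h => Nearfield.one_ne_zero (ht.symm.trans h)⟩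
  · by_contra! h
    obtain ⟨-, hji⟩ := eq_of_mul_eq_mul_of_mem_cSet (hc j) (hc i) Nearfield.one_ne_zero
      fun t => (Nearfield.one_mul _).trans (h _ (subset_gen _ ⟨t, rfl⟩))
    exact hij (hinj hji).symm

theorem le_card_cSet_of_gen_range_eq_univ [Finite R] {m : ℕ} {v : Fin k → Fin m → R}
    (hv : gen (range v) = univ) : m ≤ Nat.card (cSet R k) := by
  have hcol : ∀ j, (fun t => v t j) ≠ 0 := fun j h0 => by
    obtain ⟨_, ⟨t, rfl⟩, ht⟩ := exists_coord_ne_zero_of_gen_eq_univ hv j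
    exact ht (congrFun h0 t)
  choose c hc u hu hvu using fun j => exists_mul_mem_cSet (hcol j)
  have hinj : Function.Injective fun j => (⟨u j, hu j⟩ : cSet R k) := by
    intro i j hij
    have huij : u i = u j := congrArg Subtype.val hij
    by_contra hne
    obtain ⟨_, ⟨t, rfl⟩, ht⟩ := exists_coord_ne_mul_of_gen_eq_univ hv hne (c j * (c i)⁻¹)
    apply ht
    rw [hvu i t, hvu j t, Nearfield.mul_assoc, Nearfield.inv_mul_cancel_left (hc i), huij]
  simpa using Nat.card_le_card_of_injective _ hinj

end CSet

end Nearfield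

theorem mdim_eq_general {R : Type*} [Nearfield R] [Fintype R]
    (hR : IsProper R) {k n : ℕ}
    (hn : n = (Fintype.card R ^ k - 1) / (Fintype.card R - 1)) :
    (∃ v : Fin k → Fin n → R, gen (Set.range v) = Set.univ) ∧
      ∀ m : ℕ, (∃ v : Fin k → Fin m → R, gen (Set.range v) = Set.univ) →
        m ≤ n := by
  have hcard : Nat.card (cSet R k) = n := by
    rw [card_cSet, Nat.card_eq_fintype_card, hn]
  let e := (Finite.equivFinOfCardEq hcard).symm
  refine ⟨⟨_, gen_range_eq_univ_of_mem_cSet hR (fun j => (e j).2)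
    (Subtype.val_injective.comp e.injective)⟩, fun m ⟨v, hv⟩ => ?_⟩
  exact hcard ▸ le_card_cSet_of_gen_range_eq_univ hv

/-- For a finite proper nearfield and `n = (q^k − 1)/(q − 1)`, some `k` vectors
generate `R^n`; consequently `mdim(k,R) = (q^k − 1)/(q − 1)`. -/
theorem mdim_eq {R : Type*} [Nearfield R] [Fintype R]
    (hR : IsProper R) {k n : ℕ} (hk : 1 ≤ k)
    (hn : n = (Fintype.card R ^ k - 1) / (Fintype.card R - 1)) :
    (∃ v : Fin k → Fin n → R, gen (Set.range v) = Set.univ) ∧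
      ∀ m : ℕ, (∃ v : Fin k → Fin m → R, gen (Set.range v) = Set.univ) →
        m ≤ n :=
  mdim_eq_general hR hn
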